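/- Let Δ and Δ' be bases of Φ and Y ⊆ Δ admissible. Then F_Y^Δ ∩ C̃(Δ') ≠ ∅ if and only if there exists an admissible subset Y' ⊆ Δ' with F_Y^Δ = F_{Y'}^{Δ'}. -/

import Mathlib

/-!
Common setup for Werner, "Compactifications of Bruhat-Tits buildings associated to
linear representations":  a finite-dimensional real vector space `A` (the apartment),
a root system `Φ` in the dual space together with a Weyl-group invariant inner
product, a finite Weyl-invariant set `Λ` of (K-)weights, and for every basis `Δ`
of `Φ` a highest weight `lam0 Δ ∈ Λ`.
-/

open Pointwise Filter Topology Bornology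
open scoped Classical

noncomputable section

/-- A set `M` of linear forms is *connected* if the graph with vertex set `M` and an
edge between `m` and `n` iff `inn m n ≠ 0` is connected. -/
def GraphConnected {D : Type*} (inn : D → D → ℝ) (M : Set D) : Prop :=
  ∀ m ∈ M, ∀ n ∈ M,
    Relation.ReflTransGen (fun x y => x ∈ M ∧ y ∈ M ∧ inn x y ≠ 0) m n

/-- The coefficients of `μ` as a linear combination of the elements of `Δ` (chosen
arbitrarily if one exists; it is unique when `Δ` is linearly independent). -/
noncomputable def coeffs {A : Type*} [AddCommGroup A] [Module ℝ A]
    (Δ : Finset (Module.Dual ℝ A)) (μ : Module.Dual ℝ A) : Module.Dual ℝ A → ℝ :=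
  if h : ∃ n : Module.Dual ℝ A → ℝ, μ = ∑ b ∈ Δ, n b • b then h.choose else fun _ => 0

/-- The support `[μ]` of `μ` with respect to the basis `Δ`: the set of elements of `Δ`
whose coefficient in `μ` is nonzero. -/
noncomputable def supp {A : Type*} [AddCommGroup A] [Module ℝ A]
    (Δ : Finset (Module.Dual ℝ A)) (μ : Module.Dual ℝ A) : Finset (Module.Dual ℝ A) :=
  Δ.filter fun a => coeffs Δ μ a ≠ 0

/-- Raw data: a finite set `Φ` of roots in the dual of `A`, a product `inn` on the dual,
a finite set `Λ` of weights, and a highest weight `lam0 Δ` for every basis `Δ`. -/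
structure RootWeightData (A : Type*) [NormedAddCommGroup A] [NormedSpace ℝ A]
    [FiniteDimensional ℝ A] where
  Φ : Finset (Module.Dual ℝ A)
  inn : Module.Dual ℝ A → Module.Dual ℝ A → ℝ
  Λ : Finset (Module.Dual ℝ A)
  lam0 : Finset (Module.Dual ℝ A) → Module.Dual ℝ A

namespace RootWeightData

variable {A : Type*} [NormedAddCommGroup A] [NormedSpace ℝ A] [FiniteDimensional ℝ A]
variable (S : RootWeightData A)

/-- The reflection associated to the root `a`. -/
def refl (a : Module.Dual ℝ A) : Function.End (Module.Dual ℝ A) :=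
  fun x => x - (2 * S.inn x a / S.inn a a) • a

/-- The Weyl group `W`, generated by the reflections in the roots. -/
def weyl : Submonoid (Function.End (Module.Dual ℝ A)) :=
  Submonoid.closure {f | ∃ a ∈ S.Φ, f = S.refl a}

/-- `Δ` is a basis of the root system `Φ`: a linearly independent subset of `Φ` such
that every root is a nonnegative or nonpositive linear combination of `Δ`. -/
def IsBase (Δ : Finset (Module.Dual ℝ A)) : Prop :=
  (↑Δ : Set (Module.Dual ℝ A)) ⊆ (S.Φ : Set (Module.Dual ℝ A)) ∧
  LinearIndependent ℝ (fun a : (Δ : Set (Module.Dual ℝ A)) => (a : Module.Dual ℝ A)) ∧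
  ∀ a ∈ S.Φ,
    (∃ n : Module.Dual ℝ A → ℝ, (∀ b ∈ Δ, 0 ≤ n b) ∧ a = ∑ b ∈ Δ, n b • b) ∨
    (∃ n : Module.Dual ℝ A → ℝ, (∀ b ∈ Δ, 0 ≤ n b) ∧ a = -∑ b ∈ Δ, n b • b)

/-- `Y` is an admissible subset of the basis `Δ`: `Y ⊆ Δ` and `Y ∪ {λ₀(Δ)}` is
connected. -/
def Admissible (Δ Y : Finset (Module.Dual ℝ A)) : Prop :=
  Y ⊆ Δ ∧ GraphConnected S.inn ((↑Y : Set (Module.Dual ℝ A)) ∪ {S.lam0 Δ})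

end RootWeightData

/-- The whole setting of Werner's paper: the data of `RootWeightData`, where `Φ` is a
(crystallographic, possibly non-reduced) root system spanning the dual of `A`, `inn` is
a Weyl-invariant inner product, `Λ` is a finite Weyl-invariant set of weights, and
`lam0` picks, Weyl-equivariantly, a highest weight for each basis, dominating all of
`Λ`; moreover a subset of a basis is admissible iff it is the support of
`λ₀(Δ) - λ` for some weight `λ`. -/
structure RootWeightSystem (A : Type*) [NormedAddCommGroup A] [NormedSpace ℝ A]
    [FiniteDimensional ℝ A] extends RootWeightData A where
  inn_symm : ∀ x y, inn x y = inn y x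
  inn_add_left : ∀ x y z, inn (x + y) z = inn x z + inn y z
  inn_smul_left : ∀ (c : ℝ) (x y), inn (c • x) y = c * inn x y
  inn_pos : ∀ x, x ≠ 0 → 0 < inn x x
  root_ne_zero : ∀ a ∈ Φ, a ≠ (0 : Module.Dual ℝ A)
  neg_mem : ∀ a ∈ Φ, -a ∈ Φ
  refl_mem : ∀ a ∈ Φ, ∀ b ∈ Φ, toRootWeightData.refl a b ∈ Φ
  inn_weyl_invariant :
    ∀ w ∈ toRootWeightData.weyl, ∀ x y, inn (w x) (w y) = inn x y
  phi_spans : Submodule.span ℝ (Φ : Set (Module.Dual ℝ A)) = ⊤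
  exists_base : ∃ Δ, toRootWeightData.IsBase Δ
  base_cover : ∀ x : A, ∃ Δ, toRootWeightData.IsBase Δ ∧ ∀ a ∈ Δ, 0 ≤ a x
  base_weyl : ∀ w ∈ toRootWeightData.weyl, ∀ Δ, toRootWeightData.IsBase Δ →
    toRootWeightData.IsBase (Δ.image (w : Module.Dual ℝ A → Module.Dual ℝ A))
  lam0_mem : ∀ Δ, toRootWeightData.IsBase Δ → lam0 Δ ∈ Λ
  lam0_dominates : ∀ Δ, toRootWeightData.IsBase Δ → ∀ l ∈ Λ,
    ∃ n : Module.Dual ℝ A → ℝ, (∀ a ∈ Δ, 0 ≤ n a) ∧ lam0 Δ - l = ∑ a ∈ Δ, n a • a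
  weight_weyl_invariant : ∀ w ∈ toRootWeightData.weyl, ∀ l ∈ Λ, w l ∈ Λ
  lam0_equivariant : ∀ w ∈ toRootWeightData.weyl, ∀ Δ, toRootWeightData.IsBase Δ →
    lam0 (Δ.image (w : Module.Dual ℝ A → Module.Dual ℝ A)) = w (lam0 Δ)
  integrality : ∀ l ∈ Λ, ∀ a ∈ Φ, ∃ k : ℤ, 2 * inn l a / inn a a = (k : ℝ)
  admissible_iff_support : ∀ Δ, toRootWeightData.IsBase Δ → ∀ Y ⊆ Δ,
    (toRootWeightData.Admissible Δ Y ↔ ∃ l ∈ Λ, supp Δ (lam0 Δ - l) = Y)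

namespace RootWeightSystem

variable {A : Type*} [NormedAddCommGroup A] [NormedSpace ℝ A] [FiniteDimensional ℝ A]
variable (S : RootWeightSystem A)

/-- The face `F_Y^Δ` of the apartment `A` associated to a basis `Δ` and an admissible
subset `Y ⊆ Δ`. -/
def Face (Δ Y : Finset (Module.Dual ℝ A)) : Set A :=
  {x | (∀ a ∈ Y, a x = 0) ∧
    ∀ l ∈ S.Λ, ¬ supp Δ (S.lam0 Δ - l) ⊆ Y → 0 < (S.lam0 Δ - l) x}

/-- `F` belongs to the collection `Σ` of faces. -/
def IsFace (F : Set A) : Prop :=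
  ∃ Δ Y, S.toRootWeightData.IsBase Δ ∧ S.toRootWeightData.Admissible Δ Y ∧
    F = S.Face Δ Y

/-- The collection `Σ` of all faces. -/
def Faces : Type _ := {F : Set A // S.IsFace F}

/-- The relation identifying `(F, u)` and `(F, v)` when `u - v ∈ ⟨F⟩`; the quotient is
the disjoint union `Ā = ⊔_{F ∈ Σ} A/⟨F⟩`. -/
def AbarRel (p q : S.Faces × A) : Prop :=
  p.1 = q.1 ∧ p.2 - q.2 ∈ Submodule.span ℝ p.1.val

/-- The compactified apartment `Ā = ⊔_{F ∈ Σ} A_F`, `A_F = A/⟨F⟩`. -/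
def Abar : Type _ := Quot S.AbarRel

/-- `r_F(u)`, the image of `u ∈ A` in the stratum `A_F` of `Ā`. -/
def mkAbar (F : S.Faces) (u : A) : S.Abar := Quot.mk _ (F, u)

/-- The basic set `Γ_F(U) = ⋃_{F' ⊆ cl F} r_{F'}(U + F)` of `Ā`. -/
def Gamma (F : S.Faces) (U : Set A) : Set S.Abar :=
  {p | ∃ F' : S.Faces, F'.val ⊆ closure F.val ∧ ∃ u ∈ U + F.val, p = S.mkAbar F' u}

/-- The topology of `Ā`, generated by the sets `Γ_F(U)` for `F ∈ Σ` and `U ⊆ A`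
bounded and open. -/
instance : TopologicalSpace S.Abar :=
  TopologicalSpace.generateFrom
    {V : Set S.Abar | ∃ (F : S.Faces) (U : Set A),
      IsOpen U ∧ IsBounded U ∧ V = S.Gamma F U}

/-- `f_Ω(a) = inf {t : Ω ⊆ cl_Ā {z ∈ A : a(z) ≥ -t}} ∈ ℝ ∪ {±∞}`, where `A` is embedded
in `Ā` as the stratum of the face `F₀ = {0}`. -/
def fOmega (F₀ : S.Faces) (Ω : Set S.Abar) (a : Module.Dual ℝ A) : EReal :=
  sInf ((fun t : ℝ => (t : EReal)) ''
    {t : ℝ | Ω ⊆ closure (S.mkAbar F₀ '' {z : A | -t ≤ a z})})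

end RootWeightSystem


variable {A : Type*} [NormedAddCommGroup A] [NormedSpace ℝ A] [FiniteDimensional ℝ A]

/-- The closed Weyl chamber `C̃(Δ) = {x ∈ A : a(x) ≥ 0 for all a ∈ Δ}`. -/
def Ctilde {A : Type*} [NormedAddCommGroup A] [NormedSpace ℝ A]
    [FiniteDimensional ℝ A] (Δ : Finset (Module.Dual ℝ A)) : Set A :=
  {x : A | ∀ a ∈ Δ, 0 ≤ a x}

/-- The chamber face `E_Z = {x : a(x) = 0 ∀ a ∈ Z, a(x) > 0 ∀ a ∈ Δ \ Z}`. -/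
def chamberFace {A : Type*} [NormedAddCommGroup A] [NormedSpace ℝ A]
    [FiniteDimensional ℝ A] (Δ Z : Finset (Module.Dual ℝ A)) : Set A :=
  {x : A | (∀ a ∈ Z, a x = 0) ∧ ∀ a ∈ Δ, a ∉ Z → 0 < a x}


/-!
At a point `x` of the face `F_Y^Δ` the weights `λ ∈ Λ` maximising `λ(x)` are exactly those with
`[λ₀(Δ) - λ] ⊆ Y`, and for admissible `Y` this set of maximal weights cuts out the face: `F_Y^Δ`
is the set of all points with the same maximal weights as `x`. Hence two faces sharing a point
coincide. A point `x ∈ C̃(Δ')` lies in `F_{Y'}^{Δ'}` for `Y'` the connected component of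
`λ₀(Δ')` among the roots of `Δ'` vanishing at `x`; conversely `F_{Y'}^{Δ'}` contains the point of
`C̃(Δ')` where the roots of `Y'` vanish and the other roots of `Δ'` equal `1`.
-/

open Relation

section Coeffs

variable {V : Type*} [AddCommGroup V] [Module ℝ V] {Δ : Finset (Module.Dual ℝ V)}
  {μ : Module.Dual ℝ V}

lemma eq_sum_coeffs (h : ∃ n : Module.Dual ℝ V → ℝ, μ = ∑ b ∈ Δ, n b • b) :
    μ = ∑ b ∈ Δ, coeffs Δ μ b • b := by
  rw [coeffs, dif_pos h]
  exact h.choose_spec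

lemma apply_eq_sum_supp (h : ∃ n : Module.Dual ℝ V → ℝ, μ = ∑ b ∈ Δ, n b • b) (x : V) :
    μ x = ∑ b ∈ supp Δ μ, coeffs Δ μ b * b x := by
  conv_lhs => rw [eq_sum_coeffs h]
  rw [supp, Finset.sum_filter_of_ne fun b _ hb => left_ne_zero_of_mul hb]
  simp

lemma coeffs_eq_of_eq_sum (hli : LinearIndepOn ℝ id (Δ : Set (Module.Dual ℝ V)))
    {n : Module.Dual ℝ V → ℝ} (hn : μ = ∑ b ∈ Δ, n b • b) {b : Module.Dual ℝ V} (hb : b ∈ Δ) :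
    coeffs Δ μ b = n b := by
  have h0 : ∑ b ∈ Δ, (coeffs Δ μ b - n b) • id b = 0 := by
    have : ∑ b ∈ Δ, coeffs Δ μ b • b - ∑ b ∈ Δ, n b • b = 0 := by
      rw [← eq_sum_coeffs ⟨n, hn⟩, ← hn, sub_self]
    rw [← this, ← Finset.sum_sub_distrib]
    exact Finset.sum_congr rfl fun c _ => sub_smul _ _ c
  exact sub_eq_zero.mp (linearIndepOn_iff'.mp hli Δ _ subset_rfl h0 b hb)

lemma supp_zero (hli : LinearIndepOn ℝ id (Δ : Set (Module.Dual ℝ V))) : supp Δ 0 = ∅ :=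
  Finset.filter_false_of_mem fun _ hb =>
    not_not.mpr (coeffs_eq_of_eq_sum hli (n := 0) (by simp) hb)

lemma exists_forall_apply_eq (hli : LinearIndepOn ℝ id (Δ : Set (Module.Dual ℝ V)))
    (c : Module.Dual ℝ V → ℝ) : ∃ x : V, ∀ a ∈ Δ, a x = c a := by
  let L : V →ₗ[ℝ] (Δ → ℝ) := LinearMap.pi fun a => a.1
  have hf : LinearIndependent ℝ fun a : Δ => ((a : Module.Dual ℝ V) : V → ℝ) :=
    hli.map' (LinearMap.ltoFun ℝ V ℝ ℝ) (LinearMap.ker_eq_bot.mpr DFunLike.coe_injective)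
  have hL : LinearMap.range L = ⊤ := by
    rw [← span_flip_eq_top_iff_linearIndependent.mpr hf, ← Submodule.span_eq (LinearMap.range L)]
    rfl
  obtain ⟨x, hx⟩ := LinearMap.range_eq_top.mp hL fun a => c a
  exact ⟨x, fun a ha => congr_fun hx ⟨a, ha⟩⟩

end Coeffs

section Graph

variable {D : Type*} {inn : D → D → ℝ} {M N : Set D} {p b c : D}

def graphAdj (inn : D → D → ℝ) (M : Set D) (x y : D) : Prop :=
  x ∈ M ∧ y ∈ M ∧ inn x y ≠ 0

lemma reflTransGen_graphAdj_mono (h : M ⊆ N) {a b : D}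
    (hab : ReflTransGen (graphAdj inn M) a b) : ReflTransGen (graphAdj inn N) a b :=
  ReflTransGen.mono (fun _ _ hxy => ⟨h hxy.1, h hxy.2.1, hxy.2.2⟩) _ _ hab

lemma GraphConnected.of_reachable (hinn : ∀ x y, inn x y = inn y x)
    (h : ∀ m ∈ M, ReflTransGen (graphAdj inn M) p m) : GraphConnected inn M := by
  have : Std.Symm (graphAdj inn M) := ⟨fun x y hxy => ⟨hxy.2.1, hxy.1, hinn x y ▸ hxy.2.2⟩⟩
  exact fun m hm n hn => (Std.Symm.symm _ _ (h m hm)).trans (h n hn)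

lemma GraphConnected.insert (hinn : ∀ x y, inn x y = inn y x) (hM : GraphConnected inn M)
    (hb : b ∈ M) (hbc : inn b c ≠ 0) : GraphConnected inn (insert c M) := by
  refine .of_reachable hinn (p := b) fun m hm => ?_
  rcases hm with rfl | hm
  · exact .single ⟨Set.mem_insert_of_mem _ hb, Set.mem_insert _ _, hbc⟩
  · exact reflTransGen_graphAdj_mono (Set.subset_insert _ _) (hM b hb m hm)

lemma GraphConnected.subset_of_forall_adj (hM : GraphConnected inn M) (hp : p ∈ M)
    (hpN : p ∈ N) (hN : ∀ b c, b ∈ N → graphAdj inn M b c → c ∈ N) : M ⊆ N := by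
  intro m hm
  induction hM p hp m hm with
  | refl => exact hpN
  | tail _ hbc ih => exact hN _ _ (ih hbc.1) hbc

def graphComponent (inn : D → D → ℝ) (Z : Finset D) (p : D) : Finset D :=
  Z.filter fun a => ReflTransGen (graphAdj inn (↑Z ∪ {p})) p a

lemma graphComponent_subset (Z : Finset D) : graphComponent inn Z p ⊆ Z :=
  Finset.filter_subset _ _

lemma reflTransGen_of_mem_graphComponent {Z : Finset D}
    (hb : b ∈ (↑(graphComponent inn Z p) : Set D) ∪ {p}) :
    ReflTransGen (graphAdj inn (↑Z ∪ {p})) p b := by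
  rcases hb with hb | rfl
  · exact (Finset.mem_filter.mp hb).2
  · rfl

lemma mem_graphComponent_of_adj {Z : Finset D}
    (hb : b ∈ (↑(graphComponent inn Z p) : Set D) ∪ {p}) (hc : c ∈ Z) (hbc : inn b c ≠ 0) :
    c ∈ graphComponent inn Z p := by
  refine Finset.mem_filter.mpr ⟨hc, (reflTransGen_of_mem_graphComponent hb).tail ⟨?_, ?_, hbc⟩⟩
  · exact Set.union_subset_union_left _ (Finset.coe_subset.mpr (graphComponent_subset Z)) hb
  · exact Or.inl hc

lemma mem_graphComponent_union_of_reflTransGen {Z : Finset D} {m : D}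
    (hm : m ∈ (↑Z : Set D) ∪ {p}) (h : ReflTransGen (graphAdj inn (↑Z ∪ {p})) p m) :
    m ∈ (↑(graphComponent inn Z p) : Set D) ∪ {p} := by
  rcases hm with hm | rfl
  · exact Or.inl (Finset.mem_filter.mpr ⟨hm, h⟩)
  · exact Or.inr rfl

lemma graphConnected_graphComponent (hinn : ∀ x y, inn x y = inn y x) (Z : Finset D) :
    GraphConnected inn (↑(graphComponent inn Z p) ∪ {p}) := by
  refine .of_reachable hinn (p := p) fun m hm => ?_
  induction reflTransGen_of_mem_graphComponent hm with
  | refl => rfl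
  | @tail b c hpb hbc ih =>
    have hb := mem_graphComponent_union_of_reflTransGen hbc.1 hpb
    exact (ih hb).tail
      ⟨hb, mem_graphComponent_union_of_reflTransGen hbc.2.1 (hpb.tail hbc), hbc.2.2⟩

lemma subset_graphComponent {Z Y : Finset D} (hYZ : Y ⊆ Z)
    (hY : GraphConnected inn (↑Y ∪ {p})) : Y ⊆ graphComponent inn Z p := fun a ha =>
  Finset.mem_filter.mpr
    ⟨hYZ ha, reflTransGen_graphAdj_mono (by gcongr) (hY p (by simp) a (by simp [ha]))⟩

end Graph

namespace RootWeightSystem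

variable (S : RootWeightSystem A) {Δ Y : Finset (Module.Dual ℝ A)} {l : Module.Dual ℝ A}
  {x y : A}

lemma lam0_sub_apply_eq_sum (hΔ : S.IsBase Δ) (hl : l ∈ S.Λ) (x : A) :
    (S.lam0 Δ - l) x = ∑ b ∈ supp Δ (S.lam0 Δ - l), coeffs Δ (S.lam0 Δ - l) b * b x :=
  apply_eq_sum_supp ((S.lam0_dominates Δ hΔ l hl).imp fun _ h => h.2) x

lemma coeffs_lam0_sub_nonneg (hΔ : S.IsBase Δ) (hl : l ∈ S.Λ) {b : Module.Dual ℝ A}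
    (hb : b ∈ Δ) : 0 ≤ coeffs Δ (S.lam0 Δ - l) b := by
  obtain ⟨n, hn0, hn⟩ := S.lam0_dominates Δ hΔ l hl
  rw [coeffs_eq_of_eq_sum hΔ.2.1 hn hb]
  exact hn0 b hb

lemma admissible_supp_lam0_sub (hΔ : S.IsBase Δ) (hl : l ∈ S.Λ) :
    S.Admissible Δ (supp Δ (S.lam0 Δ - l)) :=
  (S.admissible_iff_support Δ hΔ _ (Finset.filter_subset _ _)).mpr ⟨l, hl, rfl⟩

lemma lam0_sub_apply_eq_zero (hΔ : S.IsBase Δ) (hl : l ∈ S.Λ)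
    (hy : ∀ a ∈ supp Δ (S.lam0 Δ - l), a y = 0) : (S.lam0 Δ - l) y = 0 := by
  rw [S.lam0_sub_apply_eq_sum hΔ hl]
  exact Finset.sum_eq_zero fun a ha => by rw [hy a ha, mul_zero]

lemma lam0_sub_apply_pos (hΔ : S.IsBase Δ) (hl : l ∈ S.Λ) (hx : x ∈ Ctilde Δ)
    {c : Module.Dual ℝ A} (hc : c ∈ supp Δ (S.lam0 Δ - l)) (hcx : 0 < c x) :
    0 < (S.lam0 Δ - l) x := by
  obtain ⟨hcΔ, hc0⟩ := Finset.mem_filter.mp hc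
  have hterm : ∀ b ∈ supp Δ (S.lam0 Δ - l), 0 ≤ coeffs Δ (S.lam0 Δ - l) b * b x :=
    fun b hb => mul_nonneg (S.coeffs_lam0_sub_nonneg hΔ hl (Finset.filter_subset _ _ hb))
      (hx b (Finset.filter_subset _ _ hb))
  rw [S.lam0_sub_apply_eq_sum hΔ hl]
  exact (mul_pos ((S.coeffs_lam0_sub_nonneg hΔ hl hcΔ).lt_of_ne' hc0) hcx).trans_le
    (Finset.single_le_sum hterm hc)

lemma apply_eq_zero_of_supp_lam0_sub_eq_insert (hΔ : S.IsBase Δ) (hl : l ∈ S.Λ)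
    {c : Module.Dual ℝ A} (hsupp : supp Δ (S.lam0 Δ - l) = insert c Y) (hcY : c ∉ Y)
    (hY : ∀ a ∈ Y, a y = 0) (hy : (S.lam0 Δ - l) y = 0) : c y = 0 := by
  have hc : c ∈ supp Δ (S.lam0 Δ - l) := hsupp ▸ Finset.mem_insert_self c Y
  have hc0 : coeffs Δ (S.lam0 Δ - l) c ≠ 0 := (Finset.mem_filter.mp hc).2
  rw [S.lam0_sub_apply_eq_sum hΔ hl, hsupp, Finset.sum_insert hcY,
    Finset.sum_eq_zero fun a ha => by rw [hY a ha, mul_zero], add_zero] at hy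
  exact (mul_eq_zero.mp hy).resolve_left hc0

lemma forall_apply_eq_zero_of_admissible (hΔ : S.IsBase Δ) (hY : S.Admissible Δ Y)
    (hzero : ∀ l ∈ S.Λ, supp Δ (S.lam0 Δ - l) ⊆ Y → (S.lam0 Δ - l) y = 0) :
    ∀ a ∈ Y, a y = 0 := by
  set Z := Y.filter fun a => a y = 0
  set Y₁ := graphComponent S.inn Z (S.lam0 Δ)
  have hY₁Z : Y₁ ⊆ Z := graphComponent_subset Z
  have hY₁Y : Y₁ ⊆ Y := hY₁Z.trans (Finset.filter_subset _ _)
  -- A neighbour `c ∈ Y` of `Y₁ ∪ {λ₀}` makes `insert c Y₁` admissible, hence the support of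
  -- some `λ₀ - λ`; then `(λ₀ - λ) y = 0` forces `c y = 0`, so `c` already lies in `Y₁`.
  have step : ∀ b c, b ∈ (↑Y₁ : Set (Module.Dual ℝ A)) ∪ {S.lam0 Δ} → c ∈ Y →
      S.inn b c ≠ 0 → c ∈ Y₁ := by
    intro b c hb hcY hbc
    by_contra hcY₁
    have hadm : S.Admissible Δ (insert c Y₁) := by
      refine ⟨Finset.insert_subset (hY.1 hcY) (hY₁Y.trans hY.1), ?_⟩
      rw [Finset.coe_insert, Set.insert_union]
      exact (graphConnected_graphComponent S.inn_symm Z).insert S.inn_symm hb hbc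
    obtain ⟨l, hl, hsupp⟩ := (S.admissible_iff_support Δ hΔ _ hadm.1).mp hadm
    have hcy : c y = 0 := S.apply_eq_zero_of_supp_lam0_sub_eq_insert hΔ hl hsupp hcY₁
      (fun a ha => (Finset.mem_filter.mp (hY₁Z ha)).2)
      (hzero l hl (hsupp ▸ Finset.insert_subset hcY hY₁Y))
    exact hcY₁ (mem_graphComponent_of_adj hb (Finset.mem_filter.mpr ⟨hcY, hcy⟩) hbc)
  have hcover : (↑Y : Set (Module.Dual ℝ A)) ∪ {S.lam0 Δ} ⊆ ↑Y₁ ∪ {S.lam0 Δ} :=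
    hY.2.subset_of_forall_adj (Or.inr rfl) (Or.inr rfl) fun b c hb hbc =>
      hbc.2.1.imp (fun hc => step b c hb hc hbc.2.2) id
  intro a ha
  apply (Finset.mem_filter.mp (hY₁Z ?_)).2
  rcases hcover (Or.inl ha) with ha₁ | rfl
  · exact ha₁
  · -- `λ₀` may itself be a root of `Y`, adjacent to itself.
    exact step _ _ (Or.inr rfl) ha (S.inn_pos _ (S.root_ne_zero _ (hΔ.1 (hY.1 ha)))).ne'

def maxWeights (x : A) : Finset (Module.Dual ℝ A) :=
  S.Λ.filter fun l => ∀ m ∈ S.Λ, m x ≤ l x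

lemma apply_le_lam0_of_mem_face (hΔ : S.IsBase Δ) (hx : x ∈ S.Face Δ Y) (hl : l ∈ S.Λ) :
    l x ≤ S.lam0 Δ x ∧ (l x = S.lam0 Δ x ↔ supp Δ (S.lam0 Δ - l) ⊆ Y) := by
  by_cases hsupp : supp Δ (S.lam0 Δ - l) ⊆ Y
  · have h0 := S.lam0_sub_apply_eq_zero hΔ hl fun a ha => hx.1 a (hsupp ha)
    rw [LinearMap.sub_apply, sub_eq_zero] at h0
    exact ⟨h0.ge, iff_of_true h0.symm hsupp⟩
  · have hpos := hx.2 l hl hsupp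
    rw [LinearMap.sub_apply, sub_pos] at hpos
    exact ⟨hpos.le, iff_of_false hpos.ne hsupp⟩

lemma maxWeights_eq_of_mem_face (hΔ : S.IsBase Δ) (hx : x ∈ S.Face Δ Y) :
    S.maxWeights x = S.Λ.filter fun l => supp Δ (S.lam0 Δ - l) ⊆ Y := by
  refine Finset.filter_congr fun l hl => ?_
  rw [← (S.apply_le_lam0_of_mem_face hΔ hx hl).2]
  exact ⟨fun hmax => (S.apply_le_lam0_of_mem_face hΔ hx hl).1.antisymm (hmax _ (S.lam0_mem Δ hΔ)),
    fun h m hm => h ▸ (S.apply_le_lam0_of_mem_face hΔ hx hm).1⟩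

lemma mem_face_iff (hΔ : S.IsBase Δ) (hY : S.Admissible Δ Y) :
    y ∈ S.Face Δ Y ↔ S.maxWeights y = S.Λ.filter fun l => supp Δ (S.lam0 Δ - l) ⊆ Y := by
  refine ⟨S.maxWeights_eq_of_mem_face hΔ, fun hmax => ?_⟩
  have hmem : ∀ l ∈ S.Λ, (∀ m ∈ S.Λ, m y ≤ l y) ↔ supp Δ (S.lam0 Δ - l) ⊆ Y := fun l hl => by
    simpa [maxWeights, hl] using Finset.ext_iff.mp hmax l
  have hlam0 : ∀ m ∈ S.Λ, m y ≤ S.lam0 Δ y := (hmem _ (S.lam0_mem Δ hΔ)).mpr (by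
    rw [sub_self, supp_zero hΔ.2.1]; exact Finset.empty_subset Y)
  have hzero : ∀ l ∈ S.Λ, supp Δ (S.lam0 Δ - l) ⊆ Y → (S.lam0 Δ - l) y = 0 := by
    intro l hl hsupp
    rw [LinearMap.sub_apply]
    linarith [hlam0 l hl, (hmem l hl).mpr hsupp _ (S.lam0_mem Δ hΔ)]
  refine ⟨S.forall_apply_eq_zero_of_admissible hΔ hY hzero, fun l hl hsupp => ?_⟩
  obtain ⟨m, hm, hlm⟩ : ∃ m ∈ S.Λ, l y < m y := by
    simpa using mt (hmem l hl).mp hsupp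
  rw [LinearMap.sub_apply]
  linarith [hlam0 m hm]

lemma face_eq_setOf_maxWeights_eq (hΔ : S.IsBase Δ) (hY : S.Admissible Δ Y)
    (hx : x ∈ S.Face Δ Y) : S.Face Δ Y = {y | S.maxWeights y = S.maxWeights x} := by
  ext y
  rw [Set.mem_ofPred_eq, S.mem_face_iff hΔ hY, S.maxWeights_eq_of_mem_face hΔ hx]

lemma exists_admissible_mem_face_of_mem_ctilde (hΔ : S.IsBase Δ) (hx : x ∈ Ctilde Δ) :
    ∃ Y, S.Admissible Δ Y ∧ x ∈ S.Face Δ Y := by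
  set Z := Δ.filter fun a => a x = 0
  set Y := graphComponent S.inn Z (S.lam0 Δ)
  have hYZ : Y ⊆ Z := graphComponent_subset Z
  refine ⟨Y, ⟨hYZ.trans (Finset.filter_subset _ _), graphConnected_graphComponent S.inn_symm Z⟩,
    fun a ha => (Finset.mem_filter.mp (hYZ ha)).2, fun l hl hsupp => ?_⟩
  have hsuppΔ : supp Δ (S.lam0 Δ - l) ⊆ Δ := Finset.filter_subset _ _
  obtain ⟨c, hc, hcZ⟩ : ∃ c ∈ supp Δ (S.lam0 Δ - l), c ∉ Z := by
    by_contra! hZ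
    exact hsupp (subset_graphComponent hZ (S.admissible_supp_lam0_sub hΔ hl).2)
  have hcx : 0 < c x := (hx c (hsuppΔ hc)).lt_of_ne' fun h =>
    hcZ (Finset.mem_filter.mpr ⟨hsuppΔ hc, h⟩)
  exact S.lam0_sub_apply_pos hΔ hl hx hc hcx

lemma face_inter_ctilde_nonempty (hΔ : S.IsBase Δ) (hY : Y ⊆ Δ) :
    (S.Face Δ Y ∩ Ctilde Δ).Nonempty := by
  obtain ⟨x, hx⟩ := exists_forall_apply_eq hΔ.2.1 fun a => if a ∈ Y then 0 else 1
  have hC : x ∈ Ctilde Δ := fun a ha => by rw [hx a ha]; split_ifs <;> norm_num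
  refine ⟨x, ⟨fun a ha => by rw [hx a (hY ha), if_pos ha], fun l hl hsupp => ?_⟩, hC⟩
  obtain ⟨c, hc, hcY⟩ := Finset.not_subset.mp hsupp
  refine S.lam0_sub_apply_pos hΔ hl hC hc ?_
  rw [hx c (Finset.filter_subset _ _ hc), if_neg hcY]
  exact one_pos

end RootWeightSystem

/-- `F_Y^Δ` meets the closed chamber `C̃(Δ')` iff there exists an
admissible subset `Y' ⊆ Δ'` with `F_Y^Δ = F_{Y'}^{Δ'}`. -/
theorem face_meets_chamber_iff (S : RootWeightSystem A)
    (Δ Δ' Y : Finset (Module.Dual ℝ A))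
    (hΔ : S.toRootWeightData.IsBase Δ) (hΔ' : S.toRootWeightData.IsBase Δ')
    (hY : S.toRootWeightData.Admissible Δ Y) :
    (S.Face Δ Y ∩ Ctilde Δ').Nonempty ↔
      ∃ Y' : Finset (Module.Dual ℝ A),
        S.toRootWeightData.Admissible Δ' Y' ∧ S.Face Δ Y = S.Face Δ' Y' := by
  constructor
  · rintro ⟨x, hxF, hxC⟩
    obtain ⟨Y', hY', hxF'⟩ := S.exists_admissible_mem_face_of_mem_ctilde hΔ' hxC
    refine ⟨Y', hY', ?_⟩
    rw [S.face_eq_setOf_maxWeights_eq hΔ hY hxF, S.face_eq_setOf_maxWeights_eq hΔ' hY' hxF']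
  · rintro ⟨Y', hY', heq⟩
    exact heq ▸ S.face_inter_ctilde_nonempty hΔ' hY'.1
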